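/- Let s be a vertex of G and X, Y ⊆ V \ {s}. Then Pr(R_X) · Pr(R_Y) ≤ Pr(R_{X∪Y}) · Pr(R_{X∩Y}). -/

import Mathlib

/-!
Percolation on a finite graph `G = (V, E)` in which each edge is either
oriented or unoriented.  An edge `e` has endpoints `ends e : V × V`; if
`oriented e = true` it may be traversed only from `(ends e).1` to `(ends e).2`,
while if `oriented e = false` it may be traversed in either direction.  Each
edge is independently open (`ω e = true`) with probability `p e`; `Pr` is the
resulting product measure on configurations `ω : E → Bool`.
-/

attribute [local instance] Classical.propDecidable

namespace MixedPerc

variable {V E : Type*}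

/-- One step along an open edge, respecting orientations. -/
def Step (ends : E → V × V) (oriented : E → Bool) (ω : E → Bool) (u v : V) : Prop :=
  ∃ e, ω e = true ∧ (ends e = (u, v) ∨ (oriented e = false ∧ ends e = (v, u)))

/-- `Reach ends oriented ω u v` : there is an open path from `u` to `v`
respecting the orientations of the oriented edges. -/
def Reach (ends : E → V × V) (oriented : E → Bool) (ω : E → Bool) (u v : V) : Prop :=
  Relation.ReflTransGen (Step ends oriented ω) u v

/-- The open cluster `C_s(ω)` of `s`: the set of edges lying on some open path
(respecting orientations) starting at `s`. -/
def Cluster (ends : E → V × V) (oriented : E → Bool) (s : V) (ω : E → Bool) : Set E :=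
  {e | ω e = true ∧ (Reach ends oriented ω s (ends e).1 ∨
        (oriented e = false ∧ Reach ends oriented ω s (ends e).2))}

/-- `R_X`: the event that there is no open path (respecting orientations) from
`s` to any vertex of `X`. -/
def RX (ends : E → V × V) (oriented : E → Bool) (s : V) (X : Set V) :
    Set (E → Bool) :=
  {ω | ∀ x ∈ X, ¬ Reach ends oriented ω s x}

/-- The probability of a single configuration under the product measure. -/
noncomputable def weight [Fintype E] (p : E → ℝ) (ω : E → Bool) : ℝ :=
  ∏ e, if ω e then p e else 1 - p e

/-- The probability of an event `A ⊆ {0,1}^E`. -/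
noncomputable def Pr [Fintype E] [DecidableEq E] (p : E → ℝ) (A : Set (E → Bool)) : ℝ :=
  ∑ ω : E → Bool, A.indicator (weight p) ω

/-- Conditional expectation `E[f | B]`. -/
noncomputable def condExp [Fintype E] [DecidableEq E] (p : E → ℝ)
    (f : (E → Bool) → ℝ) (B : Set (E → Bool)) : ℝ :=
  (∑ ω : E → Bool, B.indicator (fun ω' => weight p ω' * f ω') ω) / Pr p B

/-!
Restrict percolation to a finite edge set `K` and allow sets of sources: writing `A_K(S, T)` for
the event that no open path using only edges of `K` leads from `S` to `T`, we prove
`P(A_K(S, X)) P(A_K(S', Y)) ≤ P(A_K(S ∩ S', X ∪ Y)) P(A_K(S ∪ S', X ∩ Y))`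
by induction on `K`; the theorem is the case `K = E`, `S = S' = {s}`.

If an edge `e ∈ K` leads from some `u ∈ S ∩ S'` to `t`, conditioning on `e` gives
`P(A_K(S, T)) = (1 - p e) P(A_{K-e}(S, T)) + p e P(A_{K-e}(S ∪ {t}, T))`, and the four functions
theorem on the two-point lattice `Bool` assembles the four instances of the induction hypothesis.
Otherwise every open path from `S ∩ S'` is trivial: either `S ∩ S'` meets `X ∪ Y` and the left
side vanishes, or `A_K(S ∩ S', X ∪ Y)` is certain and Harris' inequality for the decreasing
events `A_K(S, X)`, `A_K(S', Y)` concludes.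
-/

open Function Finset

def bernoulliMass (q : ℝ) (b : Bool) : ℝ := if b then q else 1 - q

lemma bernoulliMass_nonneg {q : ℝ} (hq : 0 ≤ q ∧ q ≤ 1) (b : Bool) :
    0 ≤ bernoulliMass q b := by
  cases b <;> simp [bernoulliMass] <;> linarith

lemma sum_bernoulliMass (q : ℝ) : ∑ b, bernoulliMass q b = 1 := by
  simp [bernoulliMass]

lemma bernoulliMass_inf_mul_sup (q : ℝ) (a b : Bool) :
    bernoulliMass q (a ⊓ b) * bernoulliMass q (a ⊔ b) =
      bernoulliMass q a * bernoulliMass q b := by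
  cases a <;> cases b <;> simp [bernoulliMass, mul_comm]

section Product

variable [Fintype E] {p : E → ℝ}

lemma weight_eq_prod (p : E → ℝ) (ω : E → Bool) :
    weight p ω = ∏ e, bernoulliMass (p e) (ω e) := rfl

lemma weight_nonneg (hp : ∀ e, 0 ≤ p e ∧ p e ≤ 1) (ω : E → Bool) : 0 ≤ weight p ω :=
  prod_nonneg fun e _ => bernoulliMass_nonneg (hp e) (ω e)

lemma weight_inf_mul_weight_sup (p : E → ℝ) (ω ω' : E → Bool) :
    weight p (ω ⊓ ω') * weight p (ω ⊔ ω') = weight p ω * weight p ω' := by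
  simp only [weight_eq_prod, ← prod_mul_distrib, Pi.inf_apply, Pi.sup_apply,
    bernoulliMass_inf_mul_sup]

variable [DecidableEq E]

lemma sum_weight (p : E → ℝ) : ∑ ω, weight p ω = 1 := by
  simp only [weight_eq_prod, ← Fintype.prod_sum, sum_bernoulliMass, prod_const_one]

lemma Pr_nonneg (hp : ∀ e, 0 ≤ p e ∧ p e ≤ 1) (A : Set (E → Bool)) : 0 ≤ Pr p A :=
  sum_nonneg fun ω _ => A.indicator_nonneg (fun ω _ => weight_nonneg hp ω) ω

lemma Pr_mono (hp : ∀ e, 0 ≤ p e ∧ p e ≤ 1) {A B : Set (E → Bool)} (h : A ⊆ B) :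
    Pr p A ≤ Pr p B :=
  sum_le_sum fun ω _ => Set.indicator_le_indicator_of_subset h (fun ω => weight_nonneg hp ω) ω

lemma Pr_univ (p : E → ℝ) : Pr p Set.univ = 1 := by
  simpa [Pr] using sum_weight p

lemma Pr_empty (p : E → ℝ) : Pr p ∅ = 0 := by
  simp [Pr]

lemma Pr_mul_Pr_le_Pr_inter (hp : ∀ e, 0 ≤ p e ∧ p e ≤ 1) {A B : Set (E → Bool)}
    (hA : IsLowerSet A) (hB : IsLowerSet B) : Pr p A * Pr p B ≤ Pr p (A ∩ B) := by
  have hw := weight_nonneg hp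
  have harris := four_functions_theorem_univ (A.indicator (weight p)) (B.indicator (weight p))
    ((A ∩ B).indicator (weight p)) (weight p) (Set.indicator_nonneg fun ω _ => hw ω)
    (Set.indicator_nonneg fun ω _ => hw ω) (Set.indicator_nonneg fun ω _ => hw ω) hw
    fun ω ω' => by
      by_cases hω : ω ∈ A <;> by_cases hω' : ω' ∈ B
      · rw [Set.indicator_of_mem hω, Set.indicator_of_mem hω',
          Set.indicator_of_mem (Set.mem_inter (hA inf_le_left hω) (hB inf_le_right hω')),
          weight_inf_mul_weight_sup]
      all_goals simp [hω, hω', mul_nonneg, Set.indicator_nonneg, hw]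
  rwa [sum_weight, mul_one] at harris

lemma Pr_eq_sum_update (e : E) (A : Set (E → Bool)) :
    Pr p A = ∑ c, bernoulliMass (p e) c * Pr p {ω | update ω e c ∈ A} := by
  set σ := (Equiv.funSplitAt e Bool).symm
  have fubini : ∀ g : (E → Bool) → ℝ, ∑ ω, g ω = ∑ c, ∑ ρ, g (σ (c, ρ)) := fun g => by
    rw [← σ.sum_comp, Fintype.sum_prod_type]
  set W : ({j // j ≠ e} → Bool) → ℝ :=
    fun ρ => ∏ j : {j // j ≠ e}, bernoulliMass (p j) (ρ j)
  have weight_σ : ∀ c ρ, weight p (σ (c, ρ)) = bernoulliMass (p e) c * W ρ := fun c ρ => by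
    rw [weight_eq_prod, Fintype.prod_eq_mul_prod_subtype_ne _ e]
    congr 1
    · simp [σ]
    · exact Fintype.prod_congr _ _ fun j => by simp [σ, j.2]
  have update_σ : ∀ b c ρ, update (σ (c, ρ)) e b = σ (b, ρ) := fun b c ρ => by
    ext j
    by_cases hj : j = e
    · subst hj; simp [σ]
    · simp [σ, hj]
  set g : Bool → ℝ := fun c => ∑ ρ, if σ (c, ρ) ∈ A then W ρ else 0
  have Pr_eq : ∀ B : Set (E → Bool), Pr p B =
      ∑ c, ∑ ρ, if σ (c, ρ) ∈ B then bernoulliMass (p e) c * W ρ else 0 := fun B => by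
    rw [Pr, fubini]
    simp only [Set.indicator_apply, weight_σ]
  have Pr_preimage : ∀ c, Pr p {ω | update ω e c ∈ A} = g c := fun c => by
    simp only [Pr_eq, Set.mem_ofPred_eq, update_σ, ← mul_ite_zero, ← mul_sum, ← sum_mul,
      sum_bernoulliMass, one_mul, g]
  simp only [Pr_preimage, Pr_eq A, g, mul_sum, mul_ite_zero]

end Product

lemma cond_insert_inf_subset (t : V) (S S' : Set V) (a b : Bool) :
    cond (a ⊓ b) (insert t (S ∩ S')) (S ∩ S') ⊆
      cond a (insert t S) S ∩ cond b (insert t S') S' := by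
  cases a <;> cases b
  exacts [subset_rfl, Set.inter_subset_inter_right S (Set.subset_insert t S'),
    Set.inter_subset_inter_left S' (Set.subset_insert t S),
    (Set.insert_inter_distrib t S S').subset]

lemma cond_insert_union_cond_insert (t : V) (S S' : Set V) (a b : Bool) :
    cond a (insert t S) S ∪ cond b (insert t S') S' =
      cond (a ⊔ b) (insert t (S ∪ S')) (S ∪ S') := by
  cases a <;> cases b <;> simp [Set.insert_union, Set.union_insert]

section Percolation

variable (ends : E → V × V) (oriented : E → Bool)

def Traverses (e : E) (u v : V) : Prop :=
  ends e = (u, v) ∨ (oriented e = false ∧ ends e = (v, u))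

def restrictTo [DecidableEq E] (K : Finset E) (ω : E → Bool) : E → Bool :=
  fun e => ω e && decide (e ∈ K)

def Avoids [DecidableEq E] (K : Finset E) (S T : Set V) : Set (E → Bool) :=
  {ω | ∀ x ∈ T, ¬ ∃ s ∈ S, Reach ends oriented (restrictTo K ω) s x}

variable {ends oriented}

lemma Traverses.eq_or_eq {e : E} {u t a b : V} (h : Traverses ends oriented e u t)
    (h' : Traverses ends oriented e a b) : b = u ∨ b = t := by
  rcases h with h | ⟨-, h⟩ <;> rcases h' with h' | ⟨-, h'⟩ <;> rw [h] at h' <;>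
    simp only [Prod.mk.injEq] at h' <;> tauto

lemma reach_mono {ω ω' : E → Bool} (h : ω ≤ ω') {u v : V} :
    Reach ends oriented ω u v → Reach ends oriented ω' u v := by
  refine Relation.ReflTransGen.mono ?_ u v
  rintro a b ⟨e, he, hT⟩
  exact ⟨e, Bool.le_iff_imp.1 (h e) he, hT⟩

lemma eq_of_reach_of_isolated {ω : E → Bool} {u x : V}
    (h : ∀ e, ω e = true → ∀ v, ¬ Traverses ends oriented e u v)
    (hr : Reach ends oriented ω u x) : x = u := by
  rcases hr.cases_head with rfl | ⟨v, ⟨e, he, hT⟩, -⟩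
  · rfl
  · exact absurd hT (h e he v)

variable [DecidableEq E]

lemma exists_reach_update_true_iff {ω : E → Bool} {e : E} {u t : V} {S : Set V} (hu : u ∈ S)
    (he : Traverses ends oriented e u t) (x : V) :
    (∃ s ∈ S, Reach ends oriented (update ω e true) s x) ↔
      ∃ s ∈ insert t S, Reach ends oriented ω s x := by
  constructor
  · rintro ⟨s, hs, hr⟩
    induction hr with
    | refl => exact ⟨s, Set.mem_insert_of_mem t hs, .refl⟩
    | tail _ hstep ih =>
      obtain ⟨f, hf, hT⟩ := hstep
      by_cases hfe : f = e
      · subst hfe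
        rcases he.eq_or_eq hT with rfl | rfl
        · exact ⟨_, Set.mem_insert_of_mem t hu, .refl⟩
        · exact ⟨_, Set.mem_insert _ S, .refl⟩
      · obtain ⟨s', hs', hr'⟩ := ih
        exact ⟨s', hs', hr'.tail ⟨f, by rwa [update_of_ne hfe] at hf, hT⟩⟩
  · rintro ⟨s, hs, hr⟩
    have hle : ω ≤ update ω e true := fun j => by
      by_cases hj : j = e
      · subst hj; simp
      · simp [hj]
    replace hr := reach_mono hle hr
    rcases hs with rfl | hs
    · exact ⟨u, hu, .head ⟨e, update_self e true ω, he⟩ hr⟩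
    · exact ⟨s, hs, hr⟩

lemma restrictTo_univ [Fintype E] (ω : E → Bool) : restrictTo univ ω = ω := by
  funext e
  simp only [restrictTo, mem_univ, decide_true, Bool.and_true]

lemma mem_of_restrictTo_eq_true {K : Finset E} {ω : E → Bool} {e : E}
    (h : restrictTo K ω e = true) : e ∈ K := by
  simp_all [restrictTo]

lemma restrictTo_mono (K : Finset E) {ω ω' : E → Bool} (h : ω ≤ ω') :
    restrictTo K ω ≤ restrictTo K ω' :=
  fun e => inf_le_inf_right _ (h e)

lemma restrictTo_update {K : Finset E} {e : E} (he : e ∈ K) (ω : E → Bool) (c : Bool) :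
    restrictTo K (update ω e c) = update (restrictTo (K.erase e) ω) e c := by
  ext j
  by_cases hj : j = e
  · subst hj; simp [restrictTo, he]
  · simp [restrictTo, hj]

lemma update_restrictTo_erase_false (K : Finset E) (e : E) (ω : E → Bool) :
    update (restrictTo (K.erase e) ω) e false = restrictTo (K.erase e) ω :=
  update_eq_self_iff.2 (by simp [restrictTo])

lemma isLowerSet_avoids (K : Finset E) (S T : Set V) :
    IsLowerSet (Avoids ends oriented K S T) :=
  fun _ _ hle hω x hx ⟨s, hs, hr⟩ =>
    hω x hx ⟨s, hs, reach_mono (restrictTo_mono K hle) hr⟩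

lemma avoids_anti {K : Finset E} {S₁ S₂ : Set V} (h : S₁ ⊆ S₂) (T : Set V) :
    Avoids ends oriented K S₂ T ⊆ Avoids ends oriented K S₁ T :=
  fun _ hω x hx ⟨s, hs, hr⟩ => hω x hx ⟨s, h hs, hr⟩

lemma avoids_inter_avoids_subset (K : Finset E) (S S' X Y : Set V) :
    Avoids ends oriented K S X ∩ Avoids ends oriented K S' Y ⊆
      Avoids ends oriented K (S ∪ S') (X ∩ Y) := by
  rintro ω ⟨hX, hY⟩ x ⟨hxX, hxY⟩ ⟨s, hs | hs, hr⟩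
  exacts [hX x hxX ⟨s, hs, hr⟩, hY x hxY ⟨s, hs, hr⟩]

lemma setOf_update_mem_avoids {K : Finset E} {e : E} {u t : V} {S : Set V} (he : e ∈ K)
    (hu : u ∈ S) (ht : Traverses ends oriented e u t) (T : Set V) (c : Bool) :
    {ω | update ω e c ∈ Avoids ends oriented K S T} =
      Avoids ends oriented (K.erase e) (cond c (insert t S) S) T := by
  ext ω
  cases c
  · simp only [Avoids, Set.mem_ofPred_eq, restrictTo_update he, update_restrictTo_erase_false,
      cond_false]
  · simp only [Avoids, Set.mem_ofPred_eq, restrictTo_update he,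
      exists_reach_update_true_iff hu ht, cond_true]

variable [Fintype E] {p : E → ℝ}

lemma Pr_avoids_eq_sum {K : Finset E} {e : E} {u t : V} {S : Set V} (he : e ∈ K)
    (hu : u ∈ S) (ht : Traverses ends oriented e u t) (T : Set V) :
    Pr p (Avoids ends oriented K S T) =
      ∑ c, bernoulliMass (p e) c *
        Pr p (Avoids ends oriented (K.erase e) (cond c (insert t S) S) T) := by
  rw [Pr_eq_sum_update e]
  simp only [setOf_update_mem_avoids he hu ht]

lemma Pr_avoids_mul_le_of_isolated (hp : ∀ e, 0 ≤ p e ∧ p e ≤ 1) {K : Finset E}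
    {S S' : Set V} (hiso : ∀ e ∈ K, ∀ u ∈ S ∩ S', ∀ v, ¬ Traverses ends oriented e u v)
    (X Y : Set V) :
    Pr p (Avoids ends oriented K S X) * Pr p (Avoids ends oriented K S' Y) ≤
      Pr p (Avoids ends oriented K (S ∩ S') (X ∪ Y)) *
        Pr p (Avoids ends oriented K (S ∪ S') (X ∩ Y)) := by
  have hRHS := mul_nonneg (Pr_nonneg hp (Avoids ends oriented K (S ∩ S') (X ∪ Y)))
    (Pr_nonneg hp (Avoids ends oriented K (S ∪ S') (X ∩ Y)))
  by_cases hmeet : ∃ u ∈ S ∩ S', u ∈ X ∪ Y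
  · obtain ⟨u, ⟨huS, huS'⟩, huX | huY⟩ := hmeet
    · have : Avoids ends oriented K S X = ∅ :=
        Set.eq_empty_of_forall_notMem fun ω hω => hω u huX ⟨u, huS, .refl⟩
      rwa [this, Pr_empty, zero_mul]
    · have : Avoids ends oriented K S' Y = ∅ :=
        Set.eq_empty_of_forall_notMem fun ω hω => hω u huY ⟨u, huS', .refl⟩
      rwa [this, Pr_empty, mul_zero]
  · have huniv : Avoids ends oriented K (S ∩ S') (X ∪ Y) = Set.univ := by
      refine Set.eq_univ_of_forall fun ω x hx ⟨u, hu, hr⟩ => hmeet ⟨u, hu, ?_⟩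
      rwa [← eq_of_reach_of_isolated (fun e he => hiso e (mem_of_restrictTo_eq_true he) u hu) hr]
    rw [huniv, Pr_univ, one_mul]
    calc _ ≤ Pr p (Avoids ends oriented K S X ∩ Avoids ends oriented K S' Y) :=
          Pr_mul_Pr_le_Pr_inter hp (isLowerSet_avoids K S X) (isLowerSet_avoids K S' Y)
      _ ≤ _ := Pr_mono hp (avoids_inter_avoids_subset K S S' X Y)

theorem Pr_avoids_mul_le (hp : ∀ e, 0 ≤ p e ∧ p e ≤ 1) (K : Finset E) (S S' X Y : Set V) :
    Pr p (Avoids ends oriented K S X) * Pr p (Avoids ends oriented K S' Y) ≤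
      Pr p (Avoids ends oriented K (S ∩ S') (X ∪ Y)) *
        Pr p (Avoids ends oriented K (S ∪ S') (X ∩ Y)) := by
  induction K using Finset.strongInduction generalizing S S' with
  | H K ih =>
  by_cases hiso : ∀ e ∈ K, ∀ u ∈ S ∩ S', ∀ v, ¬ Traverses ends oriented e u v
  · exact Pr_avoids_mul_le_of_isolated hp hiso X Y
  push Not at hiso
  obtain ⟨e, he, u, ⟨huS, huS'⟩, t, ht⟩ := hiso
  set F : Set V → Set V → ℝ := fun S T => Pr p (Avoids ends oriented (K.erase e) S T)
  rw [Pr_avoids_eq_sum he huS ht, Pr_avoids_eq_sum he huS' ht,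
    Pr_avoids_eq_sum he (Set.mem_inter huS huS') ht,
    Pr_avoids_eq_sum he (Set.mem_union_left S' huS) ht]
  have hβ := bernoulliMass_nonneg (hp e)
  have hF : ∀ S T, 0 ≤ F S T := fun S T => Pr_nonneg hp _
  refine four_functions_theorem_univ _ _ _ _ (fun c => mul_nonneg (hβ c) (hF _ _))
    (fun c => mul_nonneg (hβ c) (hF _ _)) (fun c => mul_nonneg (hβ c) (hF _ _))
    (fun c => mul_nonneg (hβ c) (hF _ _)) fun a b => ?_
  calc bernoulliMass (p e) a * F (cond a (insert t S) S) X *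
        (bernoulliMass (p e) b * F (cond b (insert t S') S') Y)
      = (bernoulliMass (p e) (a ⊓ b) * bernoulliMass (p e) (a ⊔ b)) *
          (F (cond a (insert t S) S) X * F (cond b (insert t S') S') Y) := by
        rw [bernoulliMass_inf_mul_sup]; ring
    _ ≤ (bernoulliMass (p e) (a ⊓ b) * bernoulliMass (p e) (a ⊔ b)) *
          (F (cond (a ⊓ b) (insert t (S ∩ S')) (S ∩ S')) (X ∪ Y) *
            F (cond (a ⊔ b) (insert t (S ∪ S')) (S ∪ S')) (X ∩ Y)) := by
        refine mul_le_mul_of_nonneg_left ?_ (mul_nonneg (hβ _) (hβ _))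
        rw [← cond_insert_union_cond_insert]
        refine (ih _ (erase_ssubset he) _ _).trans (mul_le_mul_of_nonneg_right ?_ (hF _ _))
        exact Pr_mono hp (avoids_anti (cond_insert_inf_subset t S S' a b) _)
    _ = _ := by ring

end Percolation

theorem stmt15_general [Fintype E] [DecidableEq E]
    (ends : E → V × V) (oriented : E → Bool)
    (p : E → ℝ) (hp : ∀ e, 0 ≤ p e ∧ p e ≤ 1)
    (s : V) (X Y : Set V) :
    Pr p (RX ends oriented s X) * Pr p (RX ends oriented s Y) ≤
      Pr p (RX ends oriented s (X ∪ Y)) *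
        Pr p (RX ends oriented s (X ∩ Y)) := by
  have hRX : ∀ T, RX ends oriented s T = Avoids ends oriented univ {s} T := fun T => by
    ext ω
    simp [RX, Avoids, restrictTo_univ]
  simpa only [hRX, Set.inter_self, Set.union_self] using Pr_avoids_mul_le hp univ {s} {s} X Y

/-- inequality (13) of the paper. For `X, Y ⊆ V \ {s}`,
`Pr(R_X) · Pr(R_Y) ≤ Pr(R_{X∪Y}) · Pr(R_{X∩Y})`. -/
theorem stmt15 [Fintype V] [Fintype E] [DecidableEq E]
    (ends : E → V × V) (oriented : E → Bool)
    (p : E → ℝ) (hp : ∀ e, 0 ≤ p e ∧ p e ≤ 1)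
    (s : V) (X Y : Set V) (hX : s ∉ X) (hY : s ∉ Y) :
    Pr p (RX ends oriented s X) * Pr p (RX ends oriented s Y) ≤
      Pr p (RX ends oriented s (X ∪ Y)) *
        Pr p (RX ends oriented s (X ∩ Y)) :=
  stmt15_general ends oriented p hp s X Y

end MixedPerc
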